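/- (Corollary 3.2: homothetic image of an osculating curve.) Let σ(s) = Φ(u(s),v(s)) be osculating, i.e. σ = ξσ' + (μ/κ)σ'' for smooth ξ, μ. Let c ≠ 0 be a real constant, let A : ℝ² → L(ℝ³,ℝ³) be a smooth family of linear maps, and let Φ̃ : ℝ² → ℝ³ be smooth with Φ̃_u = c·A(Φ_u) and Φ̃_v = c·A(Φ_v) pointwise. Define σ̃(s) = c·A(σ(s)) + (μ/κ)[u'²·c(∂_u A)(Φ_u) + 2u'v'·c(∂_u A)(Φ_v) + v'²·c(∂_v A)(Φ_v)], all quantities on ℝ² evaluated at (u(s),v(s)). Then σ̃(s) = ξ(Φ̃_u u' + Φ̃_v v') + (μ/κ)(Φ̃_u u'' + Φ̃_v v'' + Φ̃_uu u'² + 2Φ̃_uv u'v' + Φ̃_vv v'²), so σ̃ is an osculating curve on the patch Φ̃. -/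

import Mathlib

noncomputable section
open Matrix

/-- Partial derivative in the first (`u`) direction. -/
def pu {E : Type*} [NormedAddCommGroup E] [NormedSpace ℝ E] (f : ℝ × ℝ → E) (p : ℝ × ℝ) : E :=
  fderiv ℝ f p (1, 0)

/-- Partial derivative in the second (`v`) direction. -/
def pv {E : Type*} [NormedAddCommGroup E] [NormedSpace ℝ E] (f : ℝ × ℝ → E) (p : ℝ × ℝ) : E :=
  fderiv ℝ f p (0, 1)

variable {E : Type*} [NormedAddCommGroup E] [NormedSpace ℝ E]

lemma contDiff_pu {f : ℝ × ℝ → E} (hf : ContDiff ℝ (⊤ : ℕ∞) f) : ContDiff ℝ (⊤ : ℕ∞) (pu f) :=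
  (ContinuousLinearMap.apply ℝ E ((1:ℝ), (0:ℝ))).contDiff.comp (hf.fderiv_right (by simp))

lemma contDiff_pv {f : ℝ × ℝ → E} (hf : ContDiff ℝ (⊤ : ℕ∞) f) : ContDiff ℝ (⊤ : ℕ∞) (pv f) :=
  (ContinuousLinearMap.apply ℝ E ((0:ℝ), (1:ℝ))).contDiff.comp (hf.fderiv_right (by simp))

lemma pu_eq_snd (f : ℝ × ℝ → E) (hf : ContDiff ℝ (⊤ : ℕ∞) f) (w : ℝ × ℝ) (p : ℝ × ℝ) :
    fderiv ℝ (fun q => fderiv ℝ f q w) p = (ContinuousLinearMap.apply ℝ E w).comp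
      (fderiv ℝ (fderiv ℝ f) p) := by
  have h1 : DifferentiableAt ℝ (fderiv ℝ f) p :=
    ((hf.fderiv_right (m := (⊤ : ℕ∞)) (by simp)).differentiable (by simp)).differentiableAt
  exact (((ContinuousLinearMap.apply ℝ E w).hasFDerivAt).comp p h1.hasFDerivAt).fderiv

lemma symm_snd {f : ℝ × ℝ → E} (hf : ContDiff ℝ (⊤ : ℕ∞) f) (p : ℝ × ℝ) :
    pv (pu f) p = pu (pv f) p := by
  have hs : IsSymmSndFDerivAt ℝ f p :=
    (hf.contDiffAt).isSymmSndFDerivAt (by rw [minSmoothness_of_isRCLikeNormedField]; exact WithTop.coe_le_coe.mpr (le_top : (2:ℕ∞) ≤ ⊤))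
  show fderiv ℝ (fun q => fderiv ℝ f q (1,0)) p (0,1) =
    fderiv ℝ (fun q => fderiv ℝ f q (0,1)) p (1,0)
  rw [pu_eq_snd f hf, pu_eq_snd f hf]
  simpa using hs (0,1) (1,0)

/-- chain rule for curves -/
lemma deriv_comp2 {f : ℝ × ℝ → E} (hf : ContDiff ℝ (⊤ : ℕ∞) f) {u v : ℝ → ℝ}
    (hu : ContDiff ℝ (⊤ : ℕ∞) u) (hv : ContDiff ℝ (⊤ : ℕ∞) v) (s : ℝ) :
    deriv (fun t => f (u t, v t)) s =
      deriv u s • pu f (u s, v s) + deriv v s • pv f (u s, v s) := by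
  have hγ : HasDerivAt (fun t => (u t, v t)) (deriv u s, deriv v s) s :=
    ((hu.differentiable (by simp)).differentiableAt.hasDerivAt).prodMk
      ((hv.differentiable (by simp)).differentiableAt.hasDerivAt)
  have hfd : HasFDerivAt f (fderiv ℝ f (u s, v s)) (u s, v s) :=
    ((hf.differentiable (by simp)) _).hasFDerivAt
  have h2 := (hfd.comp_hasDerivAt s hγ).deriv
  rw [show (fun t => f (u t, v t)) = f ∘ (fun t => (u t, v t)) from rfl, h2]
  have : (deriv u s, deriv v s) = deriv u s • ((1:ℝ),(0:ℝ)) + deriv v s • ((0:ℝ),(1:ℝ)) := by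
    simp [Prod.ext_iff]
  rw [this, map_add, _root_.map_smul, _root_.map_smul]; rfl

lemma pu_clm_apply {A : ℝ × ℝ → (E →L[ℝ] E)} (hA : ContDiff ℝ (⊤ : ℕ∞) A)
    {F : ℝ × ℝ → E} (hF : ContDiff ℝ (⊤ : ℕ∞) F) (p : ℝ × ℝ) :
    pu (fun q => A q (F q)) p = (pu A p) (F p) + A p (pu F p) := by
  show fderiv ℝ (fun q => A q (F q)) p (1,0) = _
  rw [fderiv_clm_apply ((hA.differentiable (by simp)) p) ((hF.differentiable (by simp)) p)]
  simp [pu]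
  abel

lemma pv_clm_apply {A : ℝ × ℝ → (E →L[ℝ] E)} (hA : ContDiff ℝ (⊤ : ℕ∞) A)
    {F : ℝ × ℝ → E} (hF : ContDiff ℝ (⊤ : ℕ∞) F) (p : ℝ × ℝ) :
    pv (fun q => A q (F q)) p = (pv A p) (F p) + A p (pv F p) := by
  show fderiv ℝ (fun q => A q (F q)) p (0,1) = _
  rw [fderiv_clm_apply ((hA.differentiable (by simp)) p) ((hF.differentiable (by simp)) p)]
  simp [pv]
  abel

/-- Euclidean norm on `Fin 3 → ℝ`. -/
def enorm3 (x : Fin 3 → ℝ) : ℝ := Real.sqrt (x ⬝ᵥ x)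

theorem homothetic_image_of_osculating_curve
    (Φ : ℝ × ℝ → Fin 3 → ℝ) (hΦ : ContDiff ℝ (⊤ : ℕ∞) Φ)
    (hreg : ∀ p, crossProduct (pu Φ p) (pv Φ p) ≠ 0)
    (u v : ℝ → ℝ) (hu : ContDiff ℝ (⊤ : ℕ∞) u) (hv : ContDiff ℝ (⊤ : ℕ∞) v)
    (σ : ℝ → Fin 3 → ℝ) (hσ : ∀ s, σ s = Φ (u s, v s))
    (hunit : ∀ s, enorm3 (deriv σ s) = 1)
    (κ : ℝ → ℝ) (hκ : ∀ s, κ s = enorm3 (deriv (deriv σ) s)) (hκ0 : ∀ s, κ s ≠ 0)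
    (ξ μ : ℝ → ℝ) (hξ : ContDiff ℝ (⊤ : ℕ∞) ξ) (hμ : ContDiff ℝ (⊤ : ℕ∞) μ)
    (hosc : ∀ s, σ s = ξ s • deriv σ s + (μ s / κ s) • deriv (deriv σ) s)
    (c : ℝ) (hc : c ≠ 0)
    (A : ℝ × ℝ → ((Fin 3 → ℝ) →L[ℝ] (Fin 3 → ℝ))) (hA : ContDiff ℝ (⊤ : ℕ∞) A)
    (Φt : ℝ × ℝ → Fin 3 → ℝ) (hΦt : ContDiff ℝ (⊤ : ℕ∞) Φt)
    (hΦtu : ∀ p, pu Φt p = c • A p (pu Φ p))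
    (hΦtv : ∀ p, pv Φt p = c • A p (pv Φ p))
    (σt : ℝ → Fin 3 → ℝ)
    (hσt : ∀ s, σt s =
      c • A (u s, v s) (σ s) +
      (μ s / κ s) •
        ((deriv u s) ^ 2 • (c • (pu A (u s, v s)) (pu Φ (u s, v s))) +
         (2 * deriv u s * deriv v s) • (c • (pu A (u s, v s)) (pv Φ (u s, v s))) +
         (deriv v s) ^ 2 • (c • (pv A (u s, v s)) (pv Φ (u s, v s))))) :
    ∀ s, σt s = ξ s • (deriv u s • pu Φt (u s, v s) + deriv v s • pv Φt (u s, v s)) +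
      (μ s / κ s) •
        (deriv (deriv u) s • pu Φt (u s, v s) + deriv (deriv v) s • pv Φt (u s, v s) +
         (deriv u s) ^ 2 • pu (pu Φt) (u s, v s) +
         (2 * deriv u s * deriv v s) • pv (pu Φt) (u s, v s) +
         (deriv v s) ^ 2 • pv (pv Φt) (u s, v s)) := by
  intro s
  have hγ : ContDiff ℝ (⊤ : ℕ∞) (fun t => (u t, v t)) := hu.prodMk hv
  have hσf : σ = fun t => Φ (u t, v t) := funext hσ
  have h1i : (1 : WithTop ℕ∞) ≤ ((⊤ : ℕ∞) : WithTop ℕ∞) := by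
    exact_mod_cast (le_top : (1 : ℕ∞) ≤ ⊤)
  have hu' : ContDiff ℝ ((⊤ : ℕ∞) : WithTop ℕ∞) (deriv u) :=
    (contDiff_infty_iff_deriv.mp (hu.of_le (by simp))).2
  have hv' : ContDiff ℝ ((⊤ : ℕ∞) : WithTop ℕ∞) (deriv v) :=
    (contDiff_infty_iff_deriv.mp (hv.of_le (by simp))).2
  have hF : ContDiff ℝ (⊤ : ℕ∞) (pu Φ) := contDiff_pu hΦ
  have hG : ContDiff ℝ (⊤ : ℕ∞) (pv Φ) := contDiff_pv hΦ
  set P : ℝ × ℝ := (u s, v s) with hP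
  -- first derivative of σ
  have hd1 : deriv σ = fun t => deriv u t • pu Φ (u t, v t) + deriv v t • pv Φ (u t, v t) := by
    funext t; rw [hσf]; exact deriv_comp2 hΦ hu hv t
  have hd1s : deriv σ s = deriv u s • pu Φ P + deriv v s • pv Φ P := by rw [hd1]
  -- second derivative of σ
  have hFc : ContDiff ℝ (⊤ : ℕ∞) (fun t => pu Φ (u t, v t)) := hF.comp hγ
  have hGc : ContDiff ℝ (⊤ : ℕ∞) (fun t => pv Φ (u t, v t)) := hG.comp hγ
  have hdF : deriv (fun t => pu Φ (u t, v t)) s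
      = deriv u s • pu (pu Φ) P + deriv v s • pv (pu Φ) P := deriv_comp2 hF hu hv s
  have hdG : deriv (fun t => pv Φ (u t, v t)) s
      = deriv u s • pu (pv Φ) P + deriv v s • pv (pv Φ) P := deriv_comp2 hG hu hv s
  have hd2 : deriv (deriv σ) s =
      deriv (deriv u) s • pu Φ P + deriv (deriv v) s • pv Φ P +
      (deriv u s • (deriv u s • pu (pu Φ) P + deriv v s • pv (pu Φ) P)
       + deriv v s • (deriv u s • pu (pv Φ) P + deriv v s • pv (pv Φ) P)) := by
    rw [hd1]
    rw [deriv_fun_add (f := fun t => deriv u t • pu Φ (u t, v t)) (g := fun t => deriv v t • pv Φ (u t, v t))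
        ((hu'.differentiable (by simp) s).smul (hFc.differentiable (by simp) s))
        ((hv'.differentiable (by simp) s).smul (hGc.differentiable (by simp) s)),
      deriv_fun_smul (hu'.differentiable (by simp) s) (hFc.differentiable (by simp) s),
      deriv_fun_smul (hv'.differentiable (by simp) s) (hGc.differentiable (by simp) s),
      hdF, hdG]
    module
  -- symmetry of second partials of Φ
  have hsymΦ : pv (pu Φ) P = pu (pv Φ) P := symm_snd hΦ P
  -- second partials of Φt
  have hB : ContDiff ℝ (⊤ : ℕ∞) (fun p => A p (pu Φ p)) := hA.clm_apply hF
  have hC : ContDiff ℝ (⊤ : ℕ∞) (fun p => A p (pv Φ p)) := hA.clm_apply hG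
  have hΦtuf : pu Φt = fun p => c • A p (pu Φ p) := funext hΦtu
  have hΦtvf : pv Φt = fun p => c • A p (pv Φ p) := funext hΦtv
  have hpuu : pu (pu Φt) P = c • ((pu A P) (pu Φ P) + A P (pu (pu Φ) P)) := by
    rw [hΦtuf]
    show fderiv ℝ (fun p => c • (A p (pu Φ p))) P (1,0) = _
    rw [fderiv_fun_const_smul (hB.differentiable (by simp) P) c]
    rw [ContinuousLinearMap.smul_apply]
    rw [show fderiv ℝ (fun p => A p (pu Φ p)) P (1,0)
        = pu (fun p => A p (pu Φ p)) P from rfl, pu_clm_apply hA hF P]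
  have hpvu : pv (pu Φt) P = c • ((pv A P) (pu Φ P) + A P (pv (pu Φ) P)) := by
    rw [hΦtuf]
    show fderiv ℝ (fun p => c • (A p (pu Φ p))) P (0,1) = _
    rw [fderiv_fun_const_smul (hB.differentiable (by simp) P) c]
    rw [ContinuousLinearMap.smul_apply]
    rw [show fderiv ℝ (fun p => A p (pu Φ p)) P (0,1)
        = pv (fun p => A p (pu Φ p)) P from rfl, pv_clm_apply hA hF P]
  have hpuv : pu (pv Φt) P = c • ((pu A P) (pv Φ P) + A P (pu (pv Φ) P)) := by
    rw [hΦtvf]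
    show fderiv ℝ (fun p => c • (A p (pv Φ p))) P (1,0) = _
    rw [fderiv_fun_const_smul (hC.differentiable (by simp) P) c]
    rw [ContinuousLinearMap.smul_apply]
    rw [show fderiv ℝ (fun p => A p (pv Φ p)) P (1,0)
        = pu (fun p => A p (pv Φ p)) P from rfl, pu_clm_apply hA hG P]
  have hpvv : pv (pv Φt) P = c • ((pv A P) (pv Φ P) + A P (pv (pv Φ) P)) := by
    rw [hΦtvf]
    show fderiv ℝ (fun p => c • (A p (pv Φ p))) P (0,1) = _
    rw [fderiv_fun_const_smul (hC.differentiable (by simp) P) c]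
    rw [ContinuousLinearMap.smul_apply]
    rw [show fderiv ℝ (fun p => A p (pv Φ p)) P (0,1)
        = pv (fun p => A p (pv Φ p)) P from rfl, pv_clm_apply hA hG P]
  -- symmetry of second partials of Φt gives the key exchange identity
  have hsymΦt : pv (pu Φt) P = pu (pv Φt) P := symm_snd hΦt P
  have hLba : (pv A P) (pu Φ P) = (pu A P) (pv Φ P) := by
    rw [hpvu, hpuv, ← hsymΦ] at hsymΦt
    have h2 := smul_right_injective (Fin 3 → ℝ) hc hsymΦt
    exact add_right_cancel h2
  -- put everything together
  rw [hσt s, hosc s, hd1s, hd2, hΦtu P, hΦtv P, hpuu, hpvu, hpvv, hLba, hsymΦ]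
  simp only [map_add, _root_.map_smul]
  module
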